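/- arXiv:2407.07976 — 2 statements merged into one kernel-verified Lean document; each statement's English description precedes it below -/
import Mathlib

section
/- Let G be a topological group and N a normal subgroup, with π : G → G/N the quotient homomorphism. Suppose r : G → N is a continuous crossed homomorphism with r(x) = x for all x ∈ N. Then the map G → N × (G/N) given by g ↦ (r(g), π(g)) is a bijection whose inverse (x, y) ↦ x · s(y), where s = (π restricted to ker(r))⁻¹, is continuous. In particular π restricted to ker(r) is an open map onto G/N. -/
/-- Topological splitting: a continuous crossed homomorphism `r : G → N` restricting to
the identity on `N` gives a bijection `g ↦ (r g, π g)` onto `N × G/N` with continuous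
inverse; moreover the quotient map restricted to `ker r` is open. -/
theorem continuous_crossed_hom_splitting {G : Type*} [Group G] [TopologicalSpace G]
    [IsTopologicalGroup G] (N : Subgroup G) (hN : N.Normal)
    (r : G → G) (hrN : ∀ g : G, r g ∈ N) (hr_cont : Continuous r)
    (hcrossed : ∀ g h : G, r (g * h) = (h⁻¹ * r g * h) * r h)
    (hid : ∀ x : G, x ∈ N → r x = x) :
    Function.Bijective
        (fun g : G => ((⟨r g, hrN g⟩ : N), (QuotientGroup.mk g : G ⧸ N))) ∧
      Continuous
        (Function.invFun
          (fun g : G => ((⟨r g, hrN g⟩ : N), (QuotientGroup.mk g : G ⧸ N)))) ∧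
      IsOpenMap (fun g : {g : G // r g = 1} => (QuotientGroup.mk g.1 : G ⧸ N)) := by
  -- key computation for multiplying by an element of N on the right
  have hmul : ∀ g n : G, n ∈ N → r (g * n) = n⁻¹ * r g * n * n := by
    intro g n hn
    rw [hcrossed, hid n hn]
  -- π is injective on ker r
  have hkinj : ∀ k k' : G, r k = 1 → r k' = 1 →
      (QuotientGroup.mk k : G ⧸ N) = QuotientGroup.mk k' → k = k' := by
    intro k k' hk hk' hq
    have hn : k⁻¹ * k' ∈ N := QuotientGroup.eq.mp hq
    have h1 : r (k * (k⁻¹ * k')) = (k⁻¹ * k')⁻¹ * r k * (k⁻¹ * k') * (k⁻¹ * k') :=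
      hmul _ _ hn
    rw [mul_inv_cancel_left, hk', hk] at h1
    have h2 : (1 : G) = k⁻¹ * k' := by rw [h1]; group
    have : k * 1 = k * (k⁻¹ * k') := by rw [← h2]
    simpa using this
  -- the retraction σ
  set σ : G → G := fun g => g * (r g)⁻¹ with hσdef
  have hσ1 : ∀ g : G, r (σ g) = 1 := by
    intro g
    have := hmul g (r g)⁻¹ (inv_mem (hrN g))
    rw [hσdef]
    simp only [this]
    group
  have hσmk : ∀ g : G, (QuotientGroup.mk (σ g) : G ⧸ N) = QuotientGroup.mk g := by
    intro g
    refine QuotientGroup.eq.mpr ?_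
    have : (σ g)⁻¹ * g = r g := by rw [hσdef]; group
    rw [this]; exact hrN g
  have hσwd : ∀ a b : G, (QuotientGroup.mk a : G ⧸ N) = QuotientGroup.mk b → σ a = σ b := by
    intro a b h
    exact hkinj _ _ (hσ1 a) (hσ1 b) (by rw [hσmk, hσmk, h])
  -- the continuous section s : G/N → G
  have hσcont : Continuous σ := continuous_id.mul (hr_cont.inv)
  set s : G ⧸ N → G := fun y =>
    Quotient.liftOn' y σ (fun a b h => hσwd a b (Quotient.sound' h)) with hsdef
  have hs : ∀ g : G, s (QuotientGroup.mk g) = σ g := fun g => rfl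
  have hscont : Continuous s := by
    apply Continuous.quotient_liftOn'
    exact hσcont
  set F : G → N × (G ⧸ N) :=
    fun g : G => ((⟨r g, hrN g⟩ : N), (QuotientGroup.mk g : G ⧸ N)) with hFdef
  have hinj : Function.Injective F := by
    intro a b h
    have h1 : r a = r b := congrArg (fun p => (p.1 : G)) h
    have h2 : (QuotientGroup.mk a : G ⧸ N) = QuotientGroup.mk b :=
      congrArg Prod.snd h
    have h3 : σ a = σ b := hσwd a b h2
    rw [hσdef] at h3
    simp only [h1] at h3
    exact mul_right_cancel h3
  have hsurj : Function.Surjective F := by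
    rintro ⟨⟨x, hx⟩, y⟩
    obtain ⟨g, rfl⟩ := QuotientGroup.mk_surjective y
    refine ⟨σ g * x, ?_⟩
    have hr1 : r (σ g * x) = x := by
      rw [hmul (σ g) x hx, hσ1 g]; group
    have hq1 : (QuotientGroup.mk (σ g * x) : G ⧸ N) = QuotientGroup.mk g := by
      rw [QuotientGroup.mk_mul_of_mem (σ g) hx, hσmk]
    rw [hFdef]
    exact Prod.ext (Subtype.ext hr1) hq1
  refine ⟨⟨hinj, hsurj⟩, ?_, ?_⟩
  · -- continuity of the inverse
    have hψ : ∀ g : G, s (QuotientGroup.mk g) * r g = g := by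
      intro g
      rw [hs, hσdef]
      group
    have hinv : Function.invFun F = fun p : N × (G ⧸ N) => s p.2 * (p.1 : G) := by
      funext p
      obtain ⟨g, rfl⟩ := hsurj p
      rw [Function.leftInverse_invFun hinj g]
      exact (hψ g).symm
    rw [show Function.invFun
          (fun g : G => ((⟨r g, hrN g⟩ : N), (QuotientGroup.mk g : G ⧸ N)))
        = Function.invFun F from rfl, hinv]
    exact (hscont.comp continuous_snd).mul (continuous_subtype_val.comp continuous_fst)
  · -- openness of π restricted to ker r
    have hs1 : ∀ y : G ⧸ N, r (s y) = 1 := by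
      intro y
      obtain ⟨g, rfl⟩ := QuotientGroup.mk_surjective y
      rw [hs]; exact hσ1 g
    set s' : G ⧸ N → {g : G // r g = 1} := fun y => ⟨s y, hs1 y⟩ with hs'def
    have hs'cont : Continuous s' := hscont.subtype_mk _
    have hιs' : ∀ y : G ⧸ N, (QuotientGroup.mk (s' y).1 : G ⧸ N) = y := by
      intro y
      obtain ⟨g, rfl⟩ := QuotientGroup.mk_surjective y
      rw [hs'def]
      simp only [hs]
      exact hσmk g
    have hs'ι : ∀ k : {g : G // r g = 1}, s' (QuotientGroup.mk k.1) = k := by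
      intro k
      refine Subtype.ext ?_
      rw [hs'def]
      simp only [hs, hσdef, k.2]
      group
    intro U hU
    have himg : (fun k : {g : G // r g = 1} => (QuotientGroup.mk k.1 : G ⧸ N)) '' U
        = s' ⁻¹' U := by
      ext y
      constructor
      · rintro ⟨k, hk, rfl⟩
        simpa [hs'ι k] using hk
      · intro hy
        exact ⟨s' y, hy, hιs' y⟩
    rw [himg]
    exact hU.preimage hs'cont
end

section
/- A locally injective simplicial (graph) map from a tree to a tree is injective. Concretely: if T and T' are trees (connected acyclic graphs) and f : T → T' is a graph homomorphism that is injective on the star of each vertex (i.e. for each vertex v, f is injective on the set of neighbors of v together with v), then f is injective on vertices. -/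
open SimpleGraph

lemma map_isPath_of_locally_injective {V V' : Type*}
    {T : SimpleGraph V} {T' : SimpleGraph V'} (hT' : T'.IsAcyclic)
    (f : T →g T')
    (hloc : ∀ v : V, Set.InjOn f (insert v (T.neighborSet v)))
    {a b : V} (p : T.Walk a b) (hp : p.IsPath) : (p.map f).IsPath := by
  classical
  induction p with
  | nil => simp
  | @cons a c b h q ih =>
    rw [Walk.map_cons, Walk.cons_isPath_iff] at *
    obtain ⟨hq, hanotin⟩ := hp
    refine ⟨ih hq, ?_⟩
    intro hmem
    have hfa_ne : f a ≠ f c := by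
      intro he
      exact h.ne (hloc a (Set.mem_insert _ _)
        (Set.mem_insert_of_mem _ (by exact h : c ∈ T.neighborSet a)) he)
    have hadj' : T'.Adj (f c) (f a) := (f.map_adj h).symm
    have hw1 : (Walk.cons hadj' Walk.nil : T'.Walk (f c) (f a)).IsPath := by
      simp [Walk.cons_isPath_iff, hfa_ne.symm]
    have ht : ((q.map f).takeUntil (f a) hmem).IsPath := (ih hq).takeUntil hmem
    have heq : ((q.map f).takeUntil (f a) hmem) = Walk.cons hadj' Walk.nil := by
      have := hT'.path_unique ⟨_, ht⟩ ⟨_, hw1⟩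
      exact congrArg Subtype.val this
    have hspec := (q.map f).take_spec hmem
    rw [heq] at hspec
    -- hspec : (cons hadj' nil).append d = q.map f
    cases q with
    | nil => simp at hmem; exact hfa_ne hmem
    | @cons c c' b h2 q2 =>
      have hv1 : ((Walk.cons h2 q2).map f).getVert 1 = f a := by
        rw [← hspec]
        simp [Walk.getVert_cons_succ, Walk.getVert_zero]
      rw [Walk.map_cons, Walk.getVert_cons_succ, Walk.getVert_zero] at hv1
      -- hv1 : f c' = f a
      have : c' = a := hloc c
        (Set.mem_insert_of_mem _ (by exact h2 : c' ∈ T.neighborSet c))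
        (Set.mem_insert_of_mem _ (by exact h.symm : a ∈ T.neighborSet c)) hv1
      subst this
      exact hanotin (by
        rw [Walk.support_cons]; exact List.mem_cons_of_mem _ q2.start_mem_support)

/-- A locally injective graph homomorphism between trees is injective. -/
theorem tree_locally_injective_hom_injective {V V' : Type*}
    (T : SimpleGraph V) (T' : SimpleGraph V') (hT : T.IsTree) (hT' : T'.IsTree)
    (f : T →g T')
    (hloc : ∀ v : V, Set.InjOn f (insert v (T.neighborSet v))) :
    Function.Injective f := by
  classical
  intro a b hab
  obtain ⟨p⟩ := hT.isConnected.preconnected a b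
  have hp := p.toPath.2
  have hmp := map_isPath_of_locally_injective hT'.IsAcyclic f hloc _ hp
  cases hpt : (p.toPath : T.Walk a b) with
  | nil => rfl
  | @cons a c b h q =>
    exfalso
    rw [hpt, Walk.map_cons, Walk.cons_isPath_iff] at hmp
    exact hmp.2 (by rw [hab]; exact (q.map f).end_mem_support)
end
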